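/- arXiv:2111.01487 — 2 statements merged into one kernel-verified Lean document; each statement's English description precedes it below -/
import Mathlib

section
/- Let λ > -1/2 and n ≥ 1 be an integer with Ω_n := √(n² + 2λn). Then the real 2×2 matrix S_n = (1/√((n+Ω_n)(n+2λ+Ω_n))) · [[n+λ+Ω_n, -λ], [-λ, n+λ+Ω_n]] is symmetric, symplectic (i.e., S_nᵀ J S_n = J with J = [[0,1],[-1,0]]), has determinant 1, and satisfies S_n⁻¹ A_n S_n = diag(Ω_n, -Ω_n), where A_n = [[n+λ, λ], [-λ, -n-λ]]. -/
open Matrix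

/-!
The columns of `M = !![n + λ + Ω, -λ; -λ, n + λ + Ω]` are eigenvectors of `A_n` for `±Ω`
exactly because `Ω² = n² + 2λn`, so `A_n M = M diag(Ω, -Ω)`. Moreover
`det M = (n + Ω)(n + 2λ + Ω) > 0`, so `S_n = M / √(det M)` has determinant one, and a `2 × 2`
matrix of determinant one is symplectic because `Sᵀ J S = (det S) J` for every `2 × 2` matrix.
-/

variable {R : Type*} [CommRing R]

namespace Matrix

theorem transpose_fin_two_of {α : Type*} (a b c d : α) : !![a, b; c, d]ᵀ = !![a, c; b, d] := by
  ext i j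
  fin_cases i <;> fin_cases j <;> rfl

theorem transpose_mul_J_mul_fin_two (S : Matrix (Fin 2) (Fin 2) R) :
    Sᵀ * !![0, 1; -1, 0] * S = S.det • !![0, 1; -1, 0] := by
  rw [S.eta_fin_two, transpose_fin_two_of, det_fin_two_of, mul_fin_two, mul_fin_two]
  ext i j
  fin_cases i <;> fin_cases j <;>
    simp only [Fin.zero_eta, Fin.mk_one, Fin.isValue, smul_apply, of_apply, cons_val',
      cons_val_zero, cons_val_one, cons_val_fin_one, smul_eq_mul] <;> ring

theorem inv_mul_mul_eq_of_mul_eq {S A D : Matrix (Fin 2) (Fin 2) R} (hS : IsUnit S.det)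
    (h : A * S = S * D) : S⁻¹ * A * S = D := by
  rw [mul_assoc, h, ← mul_assoc, nonsing_inv_mul S hS, one_mul]

theorem det_one_div_sqrt_det_smul_fin_two {M : Matrix (Fin 2) (Fin 2) ℝ} (hM : 0 < M.det) :
    ((1 / √M.det) • M).det = 1 := by
  rw [det_smul, Fintype.card_fin, div_pow, Real.sq_sqrt hM.le]
  field_simp

end Matrix

theorem linearization_mul_eigenbasis (n l Ω : R) (hΩ : Ω ^ 2 = n ^ 2 + 2 * l * n) :
    !![n + l, l; -l, -n - l] * !![n + l + Ω, -l; -l, n + l + Ω] =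
      !![n + l + Ω, -l; -l, n + l + Ω] * !![Ω, 0; 0, -Ω] := by
  rw [mul_fin_two, mul_fin_two]
  ext i j
  fin_cases i <;> fin_cases j <;>
    simp only [Fin.zero_eta, Fin.mk_one, Fin.isValue, of_apply, cons_val', cons_val_zero,
      cons_val_one, cons_val_fin_one]
  · linear_combination -hΩ
  · ring
  · ring
  · linear_combination hΩ

theorem det_eigenbasis (n l Ω : R) :
    !![n + l + Ω, -l; -l, n + l + Ω].det = (n + Ω) * (n + 2 * l + Ω) := by
  rw [det_fin_two_of]
  ring

/-- the matrix `S_n` diagonalizing the linearization of the logarithmic NLS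
around a plane wave is symmetric, symplectic, has determinant 1, and
`S_n⁻¹ A_n S_n = diag(Ω_n, -Ω_n)` with `Ω_n = √(n² + 2λn)`. -/
theorem Sn_symplectic_diagonalizes (lam : ℝ) (hlam : -(1:ℝ)/2 < lam) (n : ℕ) (hn : 1 ≤ n) :
    ∀ Ω : ℝ, Ω = Real.sqrt ((n : ℝ)^2 + 2 * lam * n) →
    ∀ S A J : Matrix (Fin 2) (Fin 2) ℝ,
      S = (1 / Real.sqrt (((n : ℝ) + Ω) * ((n : ℝ) + 2 * lam + Ω))) •
            !![(n : ℝ) + lam + Ω, -lam; -lam, (n : ℝ) + lam + Ω] →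
      A = !![(n : ℝ) + lam, lam; -lam, -(n : ℝ) - lam] →
      J = !![0, 1; -1, 0] →
      S.transpose = S ∧
      S.transpose * J * S = J ∧
      S.det = 1 ∧
      S⁻¹ * A * S = !![Ω, 0; 0, -Ω] := by
  rintro Ω hΩ S A J rfl rfl rfl
  have hn' : (1 : ℝ) ≤ n := by exact_mod_cast hn
  have hΩ_sq : Ω ^ 2 = (n : ℝ) ^ 2 + 2 * lam * n := by
    rw [hΩ, Real.sq_sqrt (by nlinarith)]
  have hΩ_nonneg : 0 ≤ Ω := hΩ ▸ Real.sqrt_nonneg _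
  have hdet : ((1 / √(((n : ℝ) + Ω) * ((n : ℝ) + 2 * lam + Ω))) •
      !![(n : ℝ) + lam + Ω, -lam; -lam, (n : ℝ) + lam + Ω]).det = 1 := by
    rw [← det_eigenbasis]
    exact det_one_div_sqrt_det_smul_fin_two
      (by rw [det_eigenbasis]; exact mul_pos (by linarith) (by linarith))
  refine ⟨by rw [transpose_smul, transpose_fin_two_of], ?_, hdet, ?_⟩
  · rw [transpose_mul_J_mul_fin_two, hdet, one_smul]
  · refine inv_mul_mul_eq_of_mul_eq (by rw [hdet]; exact isUnit_one) ?_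
    rw [mul_smul_comm, smul_mul_assoc, linearization_mul_eigenbasis _ _ _ hΩ_sq]
end

section
/- Let α > 0, M > 0 and y : [0,∞) → [0,∞) be differentiable with |y'(t)| ≤ M e^{-αt/2} y(t)^{3/2} for all t ≥ 0. If y(0) is small enough that (2M/α)√y(0) < 1, then sup_{t≥0} y(t) ≤ y(0)/(1 - (2M/α)√y(0))² < ∞. -/
/-!
Where `y > 0`, the inequality `y' ≤ M e^{-αt/2} y^{3/2}` makes
`y^{-1/2} - (M/α) e^{-αt/2}` nondecreasing, hence `y(t)^{-1/2} ≥ y(0)^{-1/2} - M/α`, which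
inverts to the bound while the right-hand side stays positive. Zeros of `y` are handled by
applying this to `y + ε` and letting `ε → 0⁺`.
-/

open Real Set Filter Topology

theorem monotoneOn_rpow_neg_half_add {y y' G g : ℝ → ℝ}
    (hy : ∀ t, 0 ≤ t → HasDerivAt y (y' t) t) (hG : ∀ t, 0 ≤ t → HasDerivAt G (g t) t)
    (hpos : ∀ t, 0 ≤ t → 0 < y t)
    (hle : ∀ t, 0 ≤ t → y' t ≤ 2 * g t * y t ^ (3 / 2 : ℝ)) :
    MonotoneOn (fun t => y t ^ (-(1 / 2) : ℝ) + G t) (Ici 0) := by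
  have hderiv : ∀ t, 0 ≤ t → HasDerivAt (fun t => y t ^ (-(1 / 2) : ℝ) + G t)
      (y' t * (-(1 / 2)) * y t ^ (-(1 / 2) - 1 : ℝ) + g t) t :=
    fun t ht => ((hy t ht).rpow_const (Or.inl (hpos t ht).ne')).add (hG t ht)
  refine monotoneOn_of_hasDerivWithinAt_nonneg (convex_Ici 0)
    (fun t ht => (hderiv t ht).continuousAt.continuousWithinAt)
    (fun t ht => (hderiv t (interior_subset ht)).hasDerivWithinAt) fun t ht => ?_
  rw [interior_Ici] at ht
  have hyt := hpos t ht.le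
  have hinv : y t ^ (-(1 / 2) - 1 : ℝ) * y t ^ (3 / 2 : ℝ) = 1 := by
    rw [← rpow_add hyt]; norm_num
  have hscaled : y t ^ (-(1 / 2) - 1 : ℝ) * y' t ≤ 2 * g t :=
    calc _ ≤ y t ^ (-(1 / 2) - 1 : ℝ) * (2 * g t * y t ^ (3 / 2 : ℝ)) :=
          mul_le_mul_of_nonneg_left (hle t ht.le) (rpow_pos_of_pos hyt _).le
      _ = 2 * g t * (y t ^ (-(1 / 2) - 1 : ℝ) * y t ^ (3 / 2 : ℝ)) := by ring
      _ = 2 * g t := by rw [hinv, mul_one]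
  linarith

theorem inv_sqrt_sub_le_inv_sqrt {α M : ℝ} (hα : 0 < α) (hM : 0 ≤ M) {y y' : ℝ → ℝ}
    (hy : ∀ t, 0 ≤ t → HasDerivAt y (y' t) t) (hpos : ∀ t, 0 ≤ t → 0 < y t)
    (hle : ∀ t, 0 ≤ t → y' t ≤ M * exp (-α * t / 2) * y t ^ (3 / 2 : ℝ))
    {t : ℝ} (ht : 0 ≤ t) :
    (√(y 0))⁻¹ - M / α ≤ (√(y t))⁻¹ := by
  have hG : ∀ t, 0 ≤ t → HasDerivAt (fun t => -(M / α) * exp (-α * t / 2))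
      (M / 2 * exp (-α * t / 2)) t := fun t _ => by
    refine ((((hasDerivAt_id t).const_mul (-α)).div_const 2).exp.const_mul
      (-(M / α))).congr_deriv ?_
    simp only [id]
    field_simp
  have hmono := monotoneOn_rpow_neg_half_add hy hG hpos fun t ht => by
    linarith [hle t ht]
  have h := hmono self_mem_Ici ht ht
  simp only [mul_zero, zero_div, exp_zero, mul_one] at h
  rw [sqrt_eq_rpow, sqrt_eq_rpow, ← rpow_neg (hpos 0 le_rfl).le, ← rpow_neg (hpos t ht).le]
  linarith [mul_nonneg (div_nonneg hM hα.le) (exp_pos (-α * t / 2)).le]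

theorem le_div_sq_of_inv_sqrt_sub_le {a b c : ℝ} (ha : 0 < a) (hb : 0 < b)
    (hc : c * √a < 1) (h : (√a)⁻¹ - c ≤ (√b)⁻¹) : b ≤ a / (1 - c * √a) ^ 2 := by
  have hsa : 0 < √a := sqrt_pos.mpr ha
  have hden : 0 < 1 - c * √a := by linarith
  have hsb : √b ≤ √a / (1 - c * √a) := by
    have h' : (1 - c * √a) / √a ≤ (√b)⁻¹ := by
      rwa [sub_div, one_div, mul_div_cancel_right₀ _ hsa.ne']
    rw [← inv_div]
    exact le_inv_of_le_inv₀ (div_pos hden hsa) h'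
  calc b = √b ^ 2 := (sq_sqrt hb.le).symm
    _ ≤ (√a / (1 - c * √a)) ^ 2 := pow_le_pow_left₀ (sqrt_nonneg b) hsb 2
    _ = a / (1 - c * √a) ^ 2 := by rw [div_pow, sq_sqrt ha.le]

/-- a nonnegative differentiable function satisfying the differential inequality
`|y'| ≤ M e^{-αt/2} y^{3/2}` with `(2M/α)√y(0) < 1` stays bounded by
`y(0)/(1 - (2M/α)√y(0))²` for all `t ≥ 0`. -/
theorem differential_inequality_bound (α M : ℝ) (hα : 0 < α) (hM : 0 < M)
    (y y' : ℝ → ℝ) (hy : ∀ t, 0 ≤ t → HasDerivAt y (y' t) t)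
    (hynn : ∀ t, 0 ≤ t → 0 ≤ y t)
    (hineq : ∀ t, 0 ≤ t → |y' t| ≤ M * Real.exp (-α * t / 2) * (y t) ^ ((3:ℝ)/2))
    (hsmall : (2 * M / α) * Real.sqrt (y 0) < 1) :
    ∀ t, 0 ≤ t → y t ≤ y 0 / (1 - (2 * M / α) * Real.sqrt (y 0))^2 := by
  intro t ht
  set c := 2 * M / α
  set F : ℝ → ℝ := fun ε => (y 0 + ε) / (1 - c * √(y 0 + ε)) ^ 2
  have hshift : ∀ ε, 0 < ε → c * √(y 0 + ε) < 1 → y t ≤ F ε := fun ε hε hεc => by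
    have hposε : ∀ u, 0 ≤ u → 0 < y u + ε := fun u hu => by linarith [hynn u hu]
    have hleε : ∀ u, 0 ≤ u → y' u ≤ M * exp (-α * u / 2) * (y u + ε) ^ (3 / 2 : ℝ) :=
      fun u hu => (le_abs_self _).trans <| (hineq u hu).trans <| by
        gcongr <;> linarith [hynn u hu]
    have hMc : M / α ≤ c := by simp only [c, mul_div_assoc]; linarith [div_pos hM hα]
    have h := inv_sqrt_sub_le_inv_sqrt hα hM.le (fun u hu => (hy u hu).add_const ε) hposε hleε ht
    exact le_of_add_le_of_nonneg_left
      (le_div_sq_of_inv_sqrt_sub_le (hposε 0 le_rfl) (hposε t ht) hεc (by linarith)) hε.le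
  have hsmallε : ∀ᶠ ε in 𝓝 0, c * √(y 0 + ε) < 1 :=
    (show ContinuousAt (fun ε => c * √(y 0 + ε)) 0 by fun_prop).eventually_lt_const
      (by simpa using hsmall)
  have hF : ContinuousAt F 0 :=
    ContinuousAt.div (by fun_prop) (by fun_prop) (by simpa using (sub_pos.mpr hsmall).ne')
  have hev : ∀ᶠ ε in 𝓝[>] 0, y t ≤ F ε := by
    filter_upwards [nhdsWithin_le_nhds hsmallε, self_mem_nhdsWithin] with ε hεc hε
    exact hshift ε hε hεc
  simpa [F] using ge_of_tendsto (hF.tendsto.mono_left nhdsWithin_le_nhds) hev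
end
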